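/- Let t ≥ 2, let d ∈ F_q, and suppose there exists a 2t×2t matrix E = (E_1, E_2) over F_q with t-column blocks E_1, E_2 such that: (1) E_1, E_2, E_1+E_2, E_1−E_2 each have all sets of t rows linearly independent; and (2) the matrices E, (E_1, E_1+dE_2), (E_2, E_1+dE_2), (E_1+E_2, E_1+dE_2), (E_1−E_2, E_1+dE_2) are all nonsingular. Then there exists a q^t-CMS(q^t, t). -/

import Mathlib

/-!
Rows, columns and squares are indexed by `F^t` through a bijection `v` with `Fin (q^t)` under
which `j ↦ rev j` becomes `x ↦ 1 - x`: both are involutions with the same number of fixed points,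
hence conjugate. Square `s` has entry `E₁ v_i + E₂ v_j + E₃ v_s`, with `E₃ = E₁ + d E₂`, read as a
base-`q` numeral. Along a row, a column or a diagonal of one square the vectors run through an
affine image `x ↦ M x + b` with `M ∈ {E₂, E₁, E₁ + E₂, E₁ - E₂}`; as any `t` rows of `M` are
independent this image is an orthogonal array of strength `t`. The `e`-th power of a numeral
expands into monomials in at most `e` digits, so for `e ≤ t` its power sum over the line is the
power sum over all of `F^{2t}` divided by `q^t`. Taking the same line in all the squares at once,
the nonsingularity of `(M, E₃)` makes the vectors run through `F^{2t}` exactly once, which gives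
the complementarity condition for every power.
-/

open Finset

/-- An orthogonal array of strength `t` with `k` rows (constraints), columns indexed
by `ι`, symbols in `α`, and index `lam`: in every choice of `t` distinct rows,
every `t`-tuple of symbols appears in exactly `lam` columns. -/
def IsOAOn {α ι : Type*} [Fintype α] [DecidableEq α] [Fintype ι] {k : ℕ} (t : ℕ)
    (A : Fin k → ι → α) (lam : ℕ) : Prop :=
  ∀ rows : Fin t → Fin k, Function.Injective rows → ∀ x : Fin t → α,
    (Finset.univ.filter fun c : ι => ∀ i, A (rows i) c = x i).card = lam

/-- An array is simple if no two of its columns are identical. -/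
def IsSimpleArr {α ι : Type*} {k : ℕ} (A : Fin k → ι → α) : Prop :=
  Function.Injective fun c : ι => fun i => A i c

/-- A large set of orthogonal arrays: a family (indexed by `σ`) of simple OAs of
strength `t` and index `lam` such that every `k`-tuple of symbols occurs as a
column of exactly one array of the family. -/
def IsLOAOn {α ι σ : Type*} [Fintype α] [DecidableEq α] [Fintype ι] {k : ℕ} (t : ℕ)
    (A : σ → Fin k → ι → α) (lam : ℕ) : Prop :=
  (∀ s, IsOAOn t (A s) lam ∧ IsSimpleArr (A s)) ∧
  ∀ x : Fin k → α, ∃! p : σ × ι, (fun i => A p.1 i p.2) = x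

/-- A strong double large set of orthogonal arrays `SDLOA(N; t, k, v)`:
the family `A_0, …, A_{N-1}` is an LOA, the derived arrays `B_j`
(whose `s`-th column is the `j`-th column of `A_s`) form an LOA, and the arrays
`D` (`j`-th column = `j`-th column of `A_j`) and `D'` (`j`-th column =
`(N-1-j)`-th column of `A_j`) are both OAs. -/
def IsSDLOA {α : Type*} [Fintype α] [DecidableEq α] {k N : ℕ} (t : ℕ)
    (A : Fin N → Fin k → Fin N → α) (lam : ℕ) : Prop :=
  IsLOAOn t A lam ∧
  IsLOAOn t (fun (j : Fin N) (i : Fin k) (s : Fin N) => A s i j) lam ∧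
  IsOAOn t (fun (i : Fin k) (j : Fin N) => A j i j) lam ∧
  IsOAOn t (fun (i : Fin k) (j : Fin N) => A j i (Fin.rev j)) lam

/-- A `t`-multimagic square of order `n`: an `n × n` matrix whose entries are the
consecutive integers `0, …, n^2 - 1` and such that, for every `1 ≤ e ≤ t`,
the entrywise `e`-th power has equal row sums, column sums, and sums on both
diagonals. -/
def IsMultimagic (n t : ℕ) (M : Fin n → Fin n → ℕ) : Prop :=
  (∀ i j, M i j < n ^ 2) ∧
  (Function.Injective fun p : Fin n × Fin n => M p.1 p.2) ∧
  ∀ e, 1 ≤ e → e ≤ t → ∃ S,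
    (∀ i, ∑ j, (M i j) ^ e = S) ∧ (∀ j, ∑ i, (M i j) ^ e = S) ∧
    (∑ i, (M i i) ^ e = S) ∧ (∑ i, (M i (Fin.rev i)) ^ e = S)

/-- A set of `m` complementary `t`-multimagic squares of order `n`, `m`-CMS(`n`,`t`):
`m` multimagic squares such that summing the `(t+1)`-st powers of the entries over
all `m` squares along any fixed row, any fixed column, or either diagonal always
gives `m · S_{t+1}(n)` (the conditions are stated multiplied through by `n`). -/
def IsCMS (m n t : ℕ) (B : Fin m → Fin n → Fin n → ℕ) : Prop :=
  (∀ s, IsMultimagic n t (B s)) ∧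
  (∀ i, n * ∑ s, ∑ j, (B s i j) ^ (t + 1) = m * ∑ k ∈ Finset.range (n ^ 2), k ^ (t + 1)) ∧
  (∀ j, n * ∑ s, ∑ i, (B s i j) ^ (t + 1) = m * ∑ k ∈ Finset.range (n ^ 2), k ^ (t + 1)) ∧
  (n * ∑ s, ∑ i, (B s i i) ^ (t + 1) = m * ∑ k ∈ Finset.range (n ^ 2), k ^ (t + 1)) ∧
  (n * ∑ s, ∑ i, (B s i (Fin.rev i)) ^ (t + 1) = m * ∑ k ∈ Finset.range (n ^ 2), k ^ (t + 1))

/-- Any `t` rows of the matrix `M` are linearly independent. -/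
def RowsIndep {F : Type*} [Field F] {m' : Type*} {s : ℕ} (t : ℕ)
    (M : Matrix m' (Fin s) F) : Prop :=
  ∀ rows : Fin t → m', Function.Injective rows → LinearIndependent F fun i => M (rows i)

/-- The block matrix `(A, B)` (with `A, B` of the same shape) is nonsingular, phrased
via bijectivity of the associated linear map. -/
def NonsingularPair {F : Type*} [Field F] {m' : Type*} {s : ℕ}
    (A B : Matrix m' (Fin s) F) : Prop :=
  Function.Bijective fun p : (Fin s → F) × (Fin s → F) => A.mulVec p.1 + B.mulVec p.2

open Function

namespace Equiv.Perm

variable {α : Type*} [Fintype α] [DecidableEq α]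

theorem cycleType_eq_replicate_of_involutive {σ : Perm α} (hσ : Involutive σ) :
    σ.cycleType = Multiset.replicate σ.cycleType.card 2 :=
  have : Fact (Nat.Prime 2) := ⟨Nat.prime_two⟩
  cycleType_of_pow_prime_eq_one (by ext a; simp [sq, hσ a])

theorem isConj_of_involutive_of_card_fixedPoints_eq {σ τ : Perm α}
    (hσ : Involutive σ) (hτ : Involutive τ)
    (h : Fintype.card (fixedPoints σ) = Fintype.card (fixedPoints τ)) :
    IsConj σ τ := by
  have hsum (π : Perm α) (hπ : Involutive π) :
      π.cycleType.sum = 2 * π.cycleType.card := by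
    rw [cycleType_eq_replicate_of_involutive hπ, Multiset.sum_replicate, Multiset.card_replicate,
      smul_eq_mul, mul_comm]
  rw [card_fixedPoints, card_fixedPoints] at h
  have hσle := sum_cycleType_le σ
  have hτle := sum_cycleType_le τ
  apply isConj_of_cycleType_eq
  rw [cycleType_eq_replicate_of_involutive hσ, cycleType_eq_replicate_of_involutive hτ]
  rw [hsum σ hσ] at h hσle
  rw [hsum τ hτ] at h hτle
  congr 1
  omega

end Equiv.Perm

theorem exists_equiv_semiconj_of_involutive {α β : Type*} [Fintype α] [DecidableEq α]
    [Fintype β] [DecidableEq β] {σ : Equiv.Perm α} {τ : Equiv.Perm β}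
    (hσ : Involutive σ) (hτ : Involutive τ)
    (hcard : Fintype.card α = Fintype.card β)
    (hfix : Fintype.card (fixedPoints σ) = Fintype.card (fixedPoints τ)) :
    ∃ e : α ≃ β, Semiconj e σ τ := by
  let e₀ := Fintype.equivOfCardEq hcard
  let τ' : Equiv.Perm α := e₀.symm.permCongr τ
  have hτ' : Involutive τ' := fun a => by simp [τ', Equiv.permCongr_apply, hτ _]
  have hfix' : Fintype.card (fixedPoints τ') = Fintype.card (fixedPoints τ) :=
    Fintype.card_congr <| e₀.subtypeEquiv fun a => by
      simp [τ', mem_fixedPoints, IsFixedPt, Equiv.permCongr_apply,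
        Equiv.symm_apply_eq]
  obtain ⟨c, hc⟩ := isConj_iff.mp
    (Equiv.Perm.isConj_of_involutive_of_card_fixedPoints_eq hσ hτ' (hfix.trans hfix'.symm))
  refine ⟨c.trans e₀, fun a => ?_⟩
  have := congrArg (fun π : Equiv.Perm α => e₀ (π (c a))) hc
  simpa [τ', Equiv.permCongr_apply, Equiv.Perm.mul_apply] using this

theorem Fin.card_fixedPoints_revPerm (n : ℕ) :
    Fintype.card (fixedPoints (Fin.revPerm : Equiv.Perm (Fin n))) = n % 2 := by
  rw [Fintype.card_ofFinset]
  rcases Nat.even_or_odd' n with ⟨m, rfl | rfl⟩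
  · rw [show 2 * m % 2 = 0 by omega, Finset.card_eq_zero, Finset.filter_eq_empty_iff]
    intro j _ hj
    have := congrArg Fin.val hj
    simp only [Fin.revPerm_apply, Fin.val_rev] at this
    omega
  · rw [show (2 * m + 1) % 2 = 1 by omega, Finset.card_eq_one]
    refine ⟨⟨m, by omega⟩, Finset.eq_singleton_iff_unique_mem.mpr ⟨?_, fun j hj => ?_⟩⟩
    · simp [mem_fixedPoints, IsFixedPt, Fin.ext_iff]
      omega
    · simp only [Finset.mem_filter, Finset.mem_univ, true_and, mem_fixedPoints,
        IsFixedPt, Fin.revPerm_apply, Fin.ext_iff, Fin.val_rev] at hj ⊢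
      omega

theorem FiniteField.card_fixedPoints_subLeft_one (F : Type*) [Field F] [Fintype F]
    [DecidableEq F] :
    Fintype.card (fixedPoints (Equiv.subLeft (1 : F))) = Fintype.card F % 2 := by
  have hfix (a : F) : a ∈ fixedPoints (Equiv.subLeft (1 : F)) ↔ 2 * a = 1 := by
    rw [mem_fixedPoints, IsFixedPt, Equiv.subLeft_apply, two_mul, sub_eq_iff_eq_add, eq_comm]
  by_cases hchar : ringChar F = 2
  · rw [FiniteField.even_card_iff_char_two.mp hchar, Fintype.card_eq_zero_iff]
    have : CharP F 2 := hchar ▸ ringChar.charP F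
    exact ⟨fun a => by simpa [CharTwo.two_eq_zero] using (hfix a).mp a.2⟩
  · have hodd : Fintype.card F % 2 = 1 := by
      have := mt FiniteField.even_card_iff_char_two.mpr hchar
      omega
    rw [hodd, Fintype.card_eq_one_iff]
    have h2 : (2 : F) ≠ 0 := Ring.two_ne_zero hchar
    refine ⟨⟨2⁻¹, (hfix _).mpr (mul_inv_cancel₀ h2)⟩, fun a => Subtype.ext ?_⟩
    exact eq_inv_of_mul_eq_one_left ((mul_comm _ _).trans ((hfix a).mp a.2))

theorem exists_equiv_fin_rev_eq_one_sub (F : Type*) [Field F] [Fintype F] [DecidableEq F]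
    (t : ℕ) : ∃ v : Fin (Fintype.card F ^ t) ≃ (Fin t → F), ∀ j, v j.rev = 1 - v j := by
  have hfix : Fintype.card (fixedPoints (Equiv.subLeft (1 : Fin t → F)))
      = Fintype.card (fixedPoints (Fin.revPerm : Equiv.Perm (Fin (Fintype.card F ^ t)))) := by
    calc Fintype.card (fixedPoints (Equiv.subLeft (1 : Fin t → F)))
        = Fintype.card (Fin t → fixedPoints (Equiv.subLeft (1 : F))) := by
          refine Fintype.card_congr ((Equiv.subtypeEquivRight fun x => ?_).trans
            (Equiv.subtypePiEquivPi (p := fun _ a => a ∈ fixedPoints (Equiv.subLeft (1 : F)))))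
          simp [mem_fixedPoints, IsFixedPt, funext_iff]
      _ = (Fintype.card F % 2) ^ t := by
          rw [Fintype.card_fun, Fintype.card_fin, FiniteField.card_fixedPoints_subLeft_one]
      _ = _ := by
          rw [Fin.card_fixedPoints_revPerm, Nat.pow_mod]
          rcases Nat.mod_two_eq_zero_or_one (Fintype.card F) with h | h <;> rw [h]
          · rcases t with _ | t <;> simp
          · simp
  exact exists_equiv_semiconj_of_involutive (σ := Fin.revPerm)
    (τ := Equiv.subLeft (1 : Fin t → F)) Fin.rev_rev (sub_sub_cancel 1) (by simp) hfix.symm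

section OrthogonalArray

variable {α R : Type*} [Fintype α]

theorem Fintype.sum_comp_of_injective {κ ι : Type*} [Fintype κ] [DecidableEq κ] [Fintype ι]
    [DecidableEq ι] [AddCommMonoid R]
    {r : κ → ι} (hr : Injective r) (G : (κ → α) → R) :
    ∑ w : ι → α, G (w ∘ r) = (Fintype.card α ^ (Fintype.card ι - Fintype.card κ)) • ∑ u, G u := by
  let C := {i // i ∉ Set.range r}
  let e : κ ⊕ C ≃ ι :=
    (Equiv.sumCongr (Equiv.ofInjective r hr) (Equiv.refl C)).trans (Equiv.sumCompl _)
  have hC : Fintype.card C = Fintype.card ι - Fintype.card κ := by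
    rw [Fintype.card_subtype_compl, Set.card_range_of_injective hr]
  calc ∑ w : ι → α, G (w ∘ r)
      = ∑ p : (κ → α) × (C → α), G p.1 :=
        Fintype.sum_equiv ((Equiv.arrowCongr e.symm (Equiv.refl α)).trans
          (Equiv.sumArrowEquivProdArrow κ C α)) _ _ fun _ => rfl
    _ = _ := by
        rw [Fintype.sum_prod_type, smul_sum]
        simp only [sum_const, card_univ, Fintype.card_fun, hC]

theorem exists_injective_comp_eq {ε ι : Type*} [Fintype ε] [Fintype ι] (g : ε → ι) {t : ℕ}
    (hε : Fintype.card ε ≤ t) (hι : t ≤ Fintype.card ι) :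
    ∃ r : Fin t → ι, Injective r ∧ ∃ σ : ε → Fin t, r ∘ σ = g := by
  classical
  obtain ⟨T, hgT, hT⟩ := Finset.exists_superset_card_eq
    ((card_image_le.trans_eq card_univ).trans hε : #(univ.image g) ≤ t) hι
  let eT : T ≃ Fin t := T.equivFinOfCardEq hT
  refine ⟨fun i => eT.symm i, Subtype.val_injective.comp eT.symm.injective,
    fun m => eT ⟨g m, hgT (mem_image_of_mem g (mem_univ m))⟩, ?_⟩
  ext m
  simp

variable [DecidableEq α] {ι : Type*} [Fintype ι] {k t lam : ℕ} {A : Fin k → ι → α}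

theorem isOAOn_one_of_bijective
    (hA : ∀ rows : Fin t → Fin k, Injective rows → Bijective fun c i => A (rows i) c) :
    IsOAOn t A 1 := by
  intro rows hrows x
  let e := Equiv.ofBijective _ (hA rows hrows)
  rw [card_eq_one]
  refine ⟨e.symm x, ?_⟩
  ext c
  simp [← funext_iff, Equiv.eq_symm_apply, e]

theorem IsOAOn.sum_comp [AddCommMonoid R] (hA : IsOAOn t A lam) {rows : Fin t → Fin k}
    (hrows : Injective rows) (H : (Fin t → α) → R) :
    ∑ c, H (fun i => A (rows i) c) = lam • ∑ u, H u := by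
  rw [← sum_fiberwise' univ (fun c i => A (rows i) c) H, smul_sum]
  refine sum_congr rfl fun u _ => ?_
  rw [sum_const, ← hA rows hrows u]
  simp only [funext_iff]

theorem IsOAOn.card_pow_smul_sum_pow [CommSemiring R] (hA : IsOAOn t A lam) (htk : t ≤ k)
    {e : ℕ} (he : e ≤ t) (f : Fin k → α → R) :
    (Fintype.card α ^ (k - t)) • ∑ c, (∑ i, f i (A i c)) ^ e
      = lam • ∑ w : Fin k → α, (∑ i, f i (w i)) ^ e := by
  simp only [sum_pow', Fintype.piFinset_univ]
  rw [sum_comm, smul_sum, sum_comm (s := univ (α := Fin k → α)), smul_sum]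
  refine sum_congr rfl fun g _ => ?_
  -- the monomial indexed by `g` reads at most `e ≤ t` rows, and these extend to `t` distinct rows
  obtain ⟨r, hr, σ, rfl⟩ := exists_injective_comp_eq g (by simpa using he) (by simpa using htk)
  let H : (Fin t → α) → R := fun u => ∏ m, f (r (σ m)) (u (σ m))
  have hcyl := Fintype.sum_comp_of_injective hr H
  rw [Fintype.card_fin, Fintype.card_fin] at hcyl
  simp only [comp_apply]
  calc (Fintype.card α ^ (k - t)) • ∑ c, ∏ m, f (r (σ m)) (A (r (σ m)) c)
      = (Fintype.card α ^ (k - t)) • (lam • ∑ u, H u) := by rw [← hA.sum_comp hr H]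
    _ = lam • ∑ w : Fin k → α, ∏ m, f (r (σ m)) (w (r (σ m))) := by
        rw [smul_comm]
        exact congrArg (lam • ·) hcyl.symm

end OrthogonalArray

noncomputable def digitsEquiv (F : Type*) [Fintype F] (k : ℕ) :
    (Fin k → F) ≃ Fin (Fintype.card F ^ k) :=
  (Equiv.arrowCongr (Equiv.refl (Fin k)) (Fintype.equivFin F)).trans finFunctionFinEquiv

section Digits

variable {F : Type*} [Fintype F] {k : ℕ}

theorem digitsEquiv_val (w : Fin k → F) :
    (digitsEquiv F k w : ℕ) = ∑ i, (Fintype.equivFin F (w i) : ℕ) * Fintype.card F ^ (i : ℕ) :=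
  finFunctionFinEquiv_apply _

theorem sum_digitsEquiv_pow (e : ℕ) :
    ∑ w : Fin k → F, (digitsEquiv F k w : ℕ) ^ e
      = ∑ n ∈ Finset.range (Fintype.card F ^ k), n ^ e := by
  rw [← Fin.sum_univ_eq_sum_range (· ^ e)]
  exact Equiv.sum_comp (digitsEquiv F k) (fun n => (n : ℕ) ^ e)

end Digits

section Matrices

open Matrix

variable {F : Type*} [Field F] [Fintype F] {k t : ℕ}

theorem NonsingularPair.sum_sum_comp {m : Type*} [Fintype m] [DecidableEq m]
    {M M' : Matrix m (Fin t) F} (h : NonsingularPair M M') {ι : Type*} [Fintype ι]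
    (v : ι ≃ (Fin t → F)) (b : m → F) {R : Type*} [AddCommMonoid R] (G : (m → F) → R) :
    ∑ j, ∑ i, G (M *ᵥ v i + M' *ᵥ v j + b) = ∑ w, G w := by
  rw [← Fintype.sum_prod_type']
  exact ((Equiv.addRight b).bijective.comp
    (h.comp ((v.prodCongr v).trans (Equiv.prodComm _ _)).bijective)).sum_comp G

variable [DecidableEq F]

theorem RowsIndep.isOAOn_mulVec_add {M : Matrix (Fin k) (Fin t) F} (hM : RowsIndep t M)
    (b : Fin k → F) : IsOAOn t (fun i x => (M *ᵥ x + b) i) 1 := by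
  refine isOAOn_one_of_bijective fun rows hrows => ?_
  have hunit : IsUnit (M.submatrix rows id) :=
    Matrix.linearIndependent_rows_iff_isUnit.mp (hM rows hrows)
  exact (Equiv.addRight (b ∘ rows)).bijective.comp
    ⟨Matrix.mulVec_injective_iff_isUnit.mpr hunit, Matrix.mulVec_surjective_iff_isUnit.mpr hunit⟩

theorem RowsIndep.card_pow_mul_sum_digitsEquiv_pow {M : Matrix (Fin k) (Fin t) F}
    (hM : RowsIndep t M) (htk : t ≤ k) {e : ℕ} (he : e ≤ t) {ι : Type*} [Fintype ι]
    (v : ι ≃ (Fin t → F)) (b : Fin k → F) :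
    Fintype.card F ^ (k - t) * ∑ i, (digitsEquiv F k (M *ᵥ v i + b) : ℕ) ^ e
      = ∑ w, (digitsEquiv F k w : ℕ) ^ e := by
  have := (hM.isOAOn_mulVec_add b).card_pow_smul_sum_pow htk he
    fun i a => (Fintype.equivFin F a : ℕ) * Fintype.card F ^ (i : ℕ)
  simp only [smul_eq_mul, one_mul, ← digitsEquiv_val] at this
  rw [← this, Equiv.sum_comp v (fun x => (digitsEquiv F k (M *ᵥ x + b) : ℕ) ^ e)]

end Matrices

section Squares

open Matrix

variable {F : Type*} [Field F] [Fintype F] [DecidableEq F] {t : ℕ}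
  {v : Fin (Fintype.card F ^ t) ≃ (Fin t → F)} {E₁ E₂ : Matrix (Fin (2 * t)) (Fin t) F}

theorem isMultimagic_digitsEquiv (hv : ∀ j, v j.rev = 1 - v j) (h₁ : RowsIndep t E₁)
    (h₂ : RowsIndep t E₂) (h₃ : RowsIndep t (E₁ + E₂)) (h₄ : RowsIndep t (E₁ - E₂))
    (hE : NonsingularPair E₁ E₂) (b : Fin (2 * t) → F) :
    IsMultimagic (Fintype.card F ^ t) t
      fun i j => (digitsEquiv F (2 * t) (E₁ *ᵥ v i + E₂ *ᵥ v j + b) : ℕ) := by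
  have hN : Fintype.card F ^ (2 * t) = (Fintype.card F ^ t) ^ 2 := by ring
  refine ⟨fun i j => hN ▸ Fin.isLt _, fun p p' hp => ?_, fun e _ he => ?_⟩
  · have hsum : E₁ *ᵥ v p.1 + E₂ *ᵥ v p.2 = E₁ *ᵥ v p'.1 + E₂ *ᵥ v p'.2 :=
      add_right_cancel ((digitsEquiv F (2 * t)).injective (Fin.ext hp))
    have := hE.injective (a₁ := (v p.1, v p.2)) (a₂ := (v p'.1, v p'.2)) hsum
    simp only [Prod.mk.injEq, EmbeddingLike.apply_eq_iff_eq] at this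
    exact Prod.ext this.1 this.2
  set T := ∑ w, (digitsEquiv F (2 * t) w : ℕ) ^ e
  have hline {M : Matrix (Fin (2 * t)) (Fin t) F} (hM : RowsIndep t M) (b' : Fin (2 * t) → F) :
      ∑ i, (digitsEquiv F (2 * t) (M *ᵥ v i + b') : ℕ) ^ e = T / Fintype.card F ^ t := by
    refine Nat.eq_div_of_mul_eq_right (by positivity) ?_
    simpa only [two_mul, Nat.add_sub_cancel] using
      hM.card_pow_mul_sum_digitsEquiv_pow (by omega) he v b'
  refine ⟨T / Fintype.card F ^ t, fun i => ?_, fun j => ?_, ?_, ?_⟩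
  · rw [← hline h₂ (E₁ *ᵥ v i + b)]
    congr! 4
    abel
  · rw [← hline h₁ (E₂ *ᵥ v j + b)]
    simp only [add_assoc]
  · rw [← hline h₃ b]
    simp only [add_mulVec]
  · rw [← hline h₄ (E₂ *ᵥ 1 + b)]
    congr! 4 with i
    rw [hv, mulVec_sub, sub_mulVec]
    abel

theorem isCMS_digitsEquiv (hv : ∀ j, v j.rev = 1 - v j) (h₁ : RowsIndep t E₁)
    (h₂ : RowsIndep t E₂) (h₃ : RowsIndep t (E₁ + E₂)) (h₄ : RowsIndep t (E₁ - E₂))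
    (hE : NonsingularPair E₁ E₂) {E₃ : Matrix (Fin (2 * t)) (Fin t) F}
    (hE₁₃ : NonsingularPair E₁ E₃) (hE₂₃ : NonsingularPair E₂ E₃)
    (hEadd : NonsingularPair (E₁ + E₂) E₃) (hEsub : NonsingularPair (E₁ - E₂) E₃) :
    IsCMS (Fintype.card F ^ t) (Fintype.card F ^ t) t
      fun s i j => (digitsEquiv F (2 * t) (E₁ *ᵥ v i + E₂ *ᵥ v j + E₃ *ᵥ v s) : ℕ) := by
  have hsum : ∑ w, (digitsEquiv F (2 * t) w : ℕ) ^ (t + 1)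
      = ∑ n ∈ range ((Fintype.card F ^ t) ^ 2), n ^ (t + 1) := by
    rw [sum_digitsEquiv_pow, ← pow_mul, mul_comm]
  let G w := (digitsEquiv F (2 * t) w : ℕ) ^ (t + 1)
  refine ⟨fun s => isMultimagic_digitsEquiv hv h₁ h₂ h₃ h₄ hE _, fun i => ?_, fun j => ?_, ?_, ?_⟩
  · rw [← hsum, ← hE₂₃.sum_sum_comp v (E₁ *ᵥ v i) G]
    congr! 6
    abel
  · rw [← hsum, ← hE₁₃.sum_sum_comp v (E₂ *ᵥ v j) G]
    congr! 6
    abel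
  · rw [← hsum, ← hEadd.sum_sum_comp v 0 G]
    congr! 6
    rw [add_zero, add_mulVec]
  · rw [← hsum, ← hEsub.sum_sum_comp v (E₂ *ᵥ 1) G]
    congr! 6 with s i
    rw [hv, mulVec_sub, sub_mulVec]
    abel

end Squares

theorem cms_of_matrix_general {F : Type} [Field F] [Fintype F] [DecidableEq F] {t : ℕ}
    (d : F)
    (E1 E2 : Matrix (Fin (2 * t)) (Fin t) F)
    (h1 : RowsIndep t E1) (h2 : RowsIndep t E2)
    (h3 : RowsIndep t (E1 + E2)) (h4 : RowsIndep t (E1 - E2))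
    (n1 : NonsingularPair E1 E2)
    (n2 : NonsingularPair E1 (E1 + d • E2))
    (n3 : NonsingularPair E2 (E1 + d • E2))
    (n4 : NonsingularPair (E1 + E2) (E1 + d • E2))
    (n5 : NonsingularPair (E1 - E2) (E1 + d • E2)) :
    ∃ B : Fin (Fintype.card F ^ t) → Fin (Fintype.card F ^ t) → Fin (Fintype.card F ^ t) → ℕ,
      IsCMS (Fintype.card F ^ t) (Fintype.card F ^ t) t B := by
  obtain ⟨v, hv⟩ := exists_equiv_fin_rev_eq_one_sub F t
  exact ⟨_, isCMS_digitsEquiv hv h1 h2 h3 h4 n1 n2 n3 n4 n5⟩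

/-- If `t ≥ 2`, `d ∈ F_q`, and `E = (E₁, E₂)` over `F_q` satisfies the
row-independence conditions for `E₁, E₂, E₁+E₂, E₁-E₂` and the nonsingularity of the
five matrices `E`, `(E₁, E₁+dE₂)`, `(E₂, E₁+dE₂)`, `(E₁+E₂, E₁+dE₂)`,
`(E₁-E₂, E₁+dE₂)`, then there exists a q^t-CMS(q^t, t). -/
theorem cms_of_matrix {F : Type} [Field F] [Fintype F] [DecidableEq F] {t : ℕ}
    (ht : 2 ≤ t) (d : F)
    (E1 E2 : Matrix (Fin (2 * t)) (Fin t) F)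
    (h1 : RowsIndep t E1) (h2 : RowsIndep t E2)
    (h3 : RowsIndep t (E1 + E2)) (h4 : RowsIndep t (E1 - E2))
    (n1 : NonsingularPair E1 E2)
    (n2 : NonsingularPair E1 (E1 + d • E2))
    (n3 : NonsingularPair E2 (E1 + d • E2))
    (n4 : NonsingularPair (E1 + E2) (E1 + d • E2))
    (n5 : NonsingularPair (E1 - E2) (E1 + d • E2)) :
    ∃ B : Fin (Fintype.card F ^ t) → Fin (Fintype.card F ^ t) → Fin (Fintype.card F ^ t) → ℕ,
      IsCMS (Fintype.card F ^ t) (Fintype.card F ^ t) t B :=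
  cms_of_matrix_general d E1 E2 h1 h2 h3 h4 n1 n2 n3 n4 n5
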